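/- Define P_{(2,1)}(n) := ∑_{j=-∞}^{∞} q^{10j^2+j} [2n choose n-5j]_q − ∑_{j=-∞}^{∞} q^{10j^2+11j+3} [2n choose n-5j-3]_q. Then P_{(2,1)}(n) satisfies the recurrence P_{(2,1)}(n) = (1 + q^{2n-1} + q^{2n-2}) P_{(2,1)}(n-1) − q^{4n-5} P_{(2,1)}(n-2) for n ≥ 2, with P_{(2,1)}(0) = 1 and P_{(2,1)}(1) = 1 + q. -/

import Mathlib

open Finset

noncomputable section

abbrev F := RatFunc ℚ

/-- The variable `q`, a transcendental element. -/
def q : F := RatFunc.X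

/-- `(b;b)_n = ∏_{i=1}^n (1 - b^i)` -/
def pq (b : F) (n : ℕ) : F := ∏ i ∈ Finset.range n, (1 - b ^ (i + 1))

/-- Gaussian binomial coefficient in base `b`, zero when `k < 0` or `k > a`. -/
def qbin (b : F) (a k : ℤ) : F :=
  if 0 ≤ k ∧ k ≤ a then pq b a.toNat / (pq b k.toNat * pq b (a - k).toNat) else 0

/-- Primed Gaussian binomial: equals 1 when `a < 0` and `k = 0`. -/
def qbin' (b : F) (a k : ℤ) : F :=
  if a < 0 ∧ k = 0 then 1 else qbin b a k

/-- The cylindric partition polynomial `P_{(2,1)}(n)`. -/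
def P21 (n : ℕ) : F :=
  (∑ᶠ j : ℤ, q ^ (10 * j ^ 2 + j) * qbin q (2 * (n : ℤ)) ((n : ℤ) - 5 * j)) -
    ∑ᶠ j : ℤ, q ^ (10 * j ^ 2 + 11 * j + 3) * qbin q (2 * (n : ℤ)) ((n : ℤ) - 5 * j - 3)

/-!
Write `P_{(2,1)}(n) = ∑_k c(k) [2n, n-k]_q` with `c(5j) = q^(10j²+j)`,
`c(5j+2) = -q^(10j²+9j+2)` and `c = 0` on the other residues mod 5 (the second sum of the
definition, reflected by `j ↦ -1-j`). For odd `t` the weight `c(k) q^(tk)` is antisymmetric under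
`k ↦ -(1+5t)/2 - k`, so `∑_k c(k) q^(tk) [N, r-k]_q` vanishes whenever the symmetry
`[N, r-k] = [N, N-r+k]` of the binomial is that same reflection. Lowering `N` with the two q-Pascal
rules and discarding these vanishing sums for `t = ±1` gives `P(n) = q^(2n-1) P(n-1) + Z(n)` and
`P(n) = (1 + q^(2n-1)) P(n-1) + q^(2n-2) Z(n-1)` with `Z(n) = ∑_k c(k) [2n-1, n-1-k]_q`;
eliminating `Z` gives the recurrence.
-/

section GaussianBinomial

variable {b : F}

lemma pq_succ (b : F) (n : ℕ) : pq b (n + 1) = pq b n * (1 - b ^ (n + 1)) :=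
  prod_range_succ _ _

lemma pq_zero (b : F) : pq b 0 = 1 := prod_range_zero _

lemma pq_ne_zero (hb : ∀ n : ℕ, b ^ (n + 1) ≠ 1) (n : ℕ) : pq b n ≠ 0 :=
  prod_ne_zero_iff.2 fun i _ => sub_ne_zero.2 (hb i).symm

lemma qbin_eq_zero {m k : ℤ} (h : ¬(0 ≤ k ∧ k ≤ m)) : qbin b m k = 0 := if_neg h

lemma qbin_eq_div {m k : ℤ} (h₀ : 0 ≤ k) (h₁ : k ≤ m) :
    qbin b m k = pq b m.toNat / (pq b k.toNat * pq b (m - k).toNat) := if_pos ⟨h₀, h₁⟩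

lemma qbin_zero_right (hb : ∀ n : ℕ, b ^ (n + 1) ≠ 1) {m : ℤ} (hm : 0 ≤ m) :
    qbin b m 0 = 1 := by
  rw [qbin_eq_div le_rfl hm, sub_zero, Int.toNat_zero, pq_zero, one_mul,
    div_self (pq_ne_zero hb _)]

lemma qbin_sub_self_right (b : F) (m k : ℤ) : qbin b m (m - k) = qbin b m k := by
  by_cases h : 0 ≤ k ∧ k ≤ m
  · rw [qbin_eq_div h.1 h.2, qbin_eq_div (by omega) (by omega), sub_sub_cancel, mul_comm]
  · rw [qbin_eq_zero h, qbin_eq_zero (by omega)]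

lemma qbin_self (hb : ∀ n : ℕ, b ^ (n + 1) ≠ 1) {m : ℤ} (hm : 0 ≤ m) :
    qbin b m m = 1 := by
  rw [← qbin_sub_self_right, sub_self, qbin_zero_right hb hm]

lemma pq_pascal (hb : ∀ n : ℕ, b ^ (n + 1) ≠ 1) (K D : ℕ) :
    pq b (K + D + 2) / (pq b (K + 1) * pq b (D + 1)) =
      pq b (K + D + 1) / (pq b (K + 1) * pq b D) +
        b ^ (D + 1) * (pq b (K + D + 1) / (pq b K * pq b (D + 1))) := by
  rw [show K + D + 2 = K + D + 1 + 1 by ring, pq_succ b (K + D + 1), pq_succ b K, pq_succ b D]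
  field_simp [pq_ne_zero hb, sub_ne_zero.2 (hb K).symm, sub_ne_zero.2 (hb D).symm]
  ring

lemma qbin_pascal (hb : ∀ n : ℕ, b ^ (n + 1) ≠ 1) {m : ℤ} (hm : 1 ≤ m) (k : ℤ) :
    qbin b m k = qbin b (m - 1) k + b ^ (m - k) * qbin b (m - 1) (k - 1) := by
  rcases lt_trichotomy k 0 with hk | rfl | hk
  · rw [qbin_eq_zero (by omega), qbin_eq_zero (by omega), qbin_eq_zero (by omega)]
    ring
  · rw [qbin_zero_right hb (by omega), qbin_zero_right hb (by omega), qbin_eq_zero (by omega)]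
    ring
  rcases lt_trichotomy k m with hkm | rfl | hkm
  · obtain ⟨K, rfl⟩ : ∃ K : ℕ, k = K + 1 := ⟨(k - 1).toNat, by omega⟩
    obtain ⟨D, rfl⟩ : ∃ D : ℕ, m = K + D + 2 := ⟨(m - K - 2).toNat, by omega⟩
    rw [qbin_eq_div (by omega) (by omega), qbin_eq_div (by omega) (by omega),
      qbin_eq_div (by omega) (by omega)]
    rw [show ((K : ℤ) + D + 2).toNat = K + D + 2 by omega,
      show ((K : ℤ) + 1).toNat = K + 1 by omega,
      show ((K : ℤ) + D + 2 - (K + 1)).toNat = D + 1 by omega,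
      show ((K : ℤ) + D + 2 - 1).toNat = K + D + 1 by omega,
      show ((K : ℤ) + D + 2 - 1 - (K + 1)).toNat = D by omega,
      show ((K : ℤ) + 1 - 1).toNat = K by omega,
      show ((K : ℤ) + D + 2 - 1 - (K + 1 - 1)).toNat = D + 1 by omega,
      show (K : ℤ) + D + 2 - (K + 1) = ((D + 1 : ℕ) : ℤ) by push_cast; ring, zpow_natCast]
    exact pq_pascal hb K D
  · rw [qbin_self hb (by omega), qbin_eq_zero (by omega), qbin_self hb (by omega), sub_self,
      zpow_zero]
    ring
  · rw [qbin_eq_zero (by omega), qbin_eq_zero (by omega), qbin_eq_zero (by omega)]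
    ring

lemma qbin_pascal' (hb : ∀ n : ℕ, b ^ (n + 1) ≠ 1) {m : ℤ} (hm : 1 ≤ m) (k : ℤ) :
    qbin b m k = b ^ k * qbin b (m - 1) k + qbin b (m - 1) (k - 1) := by
  rw [← qbin_sub_self_right, qbin_pascal hb hm, ← qbin_sub_self_right b (m - 1) k,
    ← qbin_sub_self_right b (m - 1) (k - 1)]
  ring_nf

end GaussianBinomial

section BinSum

variable {ι : Type*} {b : F}

def binSum (b : F) (w : ι → F) (κ : ι → ℤ) (N r : ℤ) : F :=
  ∑ᶠ x, w x * qbin b N (r - κ x)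

lemma finite_support_binSum (w : ι → F) {κ : ι → ℤ} (hκ : κ.Injective) (N r : ℤ) :
    (Function.support fun x => w x * qbin b N (r - κ x)).Finite := by
  refine ((Set.finite_Icc (r - N) r).preimage hκ.injOn).subset fun x hx => ?_
  have : qbin b N (r - κ x) ≠ 0 := right_ne_zero_of_mul hx
  by_contra hx'
  exact this (qbin_eq_zero fun h => hx' ⟨by omega, by omega⟩)

lemma binSum_pascal (hb : ∀ n : ℕ, b ^ (n + 1) ≠ 1) (hb₀ : b ≠ 0) (w : ι → F) {κ : ι → ℤ}
    (hκ : κ.Injective) {N : ℤ} (hN : 1 ≤ N) (r : ℤ) :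
    binSum b w κ N r =
      binSum b w κ (N - 1) r +
        b ^ (N - r) * binSum b (fun x => w x * b ^ κ x) κ (N - 1) (r - 1) := by
  rw [binSum, binSum, binSum, mul_finsum _ _,
    ← finsum_add_distrib (finite_support_binSum _ hκ _ _)
      ((finite_support_binSum _ hκ _ _).subset (Function.support_mul_subset_right _ _))]
  refine finsum_congr fun x => ?_
  rw [qbin_pascal hb hN, show N - (r - κ x) = N - r + κ x by ring, zpow_add₀ hb₀,
    sub_right_comm r 1]
  ring

lemma binSum_pascal' (hb : ∀ n : ℕ, b ^ (n + 1) ≠ 1) (hb₀ : b ≠ 0) (w : ι → F) {κ : ι → ℤ}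
    (hκ : κ.Injective) {N : ℤ} (hN : 1 ≤ N) (r : ℤ) :
    binSum b w κ N r =
      b ^ r * binSum b (fun x => w x * b ^ (-κ x)) κ (N - 1) r +
        binSum b w κ (N - 1) (r - 1) := by
  rw [binSum, binSum, binSum, mul_finsum _ _,
    ← finsum_add_distrib
      ((finite_support_binSum _ hκ _ _).subset (Function.support_mul_subset_right _ _))
      (finite_support_binSum _ hκ _ _)]
  refine finsum_congr fun x => ?_
  rw [qbin_pascal' hb hN, sub_eq_add_neg r, zpow_add₀ hb₀, ← sub_eq_add_neg,
    sub_right_comm r 1]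
  ring

lemma binSum_eq_zero_of_antisymm (w : ι → F) {κ : ι → ℤ} {N r : ℤ} (σ : ι ≃ ι)
    (hκ : ∀ x, κ (σ x) = 2 * r - N - κ x) (hw : ∀ x, w (σ x) = -w x) :
    binSum b w κ N r = 0 := by
  have h : binSum b w κ N r = -binSum b w κ N r :=
    calc binSum b w κ N r = ∑ᶠ x, w (σ x) * qbin b N (r - κ (σ x)) :=
          (finsum_comp_equiv σ).symm
      _ = ∑ᶠ x, -(w x * qbin b N (r - κ x)) := finsum_congr fun x => by
        rw [hw, hκ, show r - (2 * r - N - κ x) = N - (r - κ x) by ring, qbin_sub_self_right]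
        ring
      _ = -binSum b w κ N r := finsum_neg_distrib _
  linear_combination h / 2

end BinSum

lemma finsum_sum_type {α β M : Type*} [AddCommMonoid M] {f : α ⊕ β → M}
    (hf : (Function.support f).Finite) :
    ∑ᶠ x, f x = ∑ᶠ a, f (.inl a) + ∑ᶠ b, f (.inr b) := by
  rw [← finsum_mem_univ, ← Set.range_inl_union_range_inr,
    finsum_mem_union' Set.isCompl_range_inl_range_inr.disjoint
      (hf.subset Set.inter_subset_right) (hf.subset Set.inter_subset_right),
    finsum_mem_range Sum.inl_injective, finsum_mem_range Sum.inr_injective]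

lemma q_ne_zero : q ≠ 0 := RatFunc.X_ne_zero

lemma q_pow_succ_ne_one (n : ℕ) : q ^ (n + 1) ≠ 1 := by
  rw [q, ← RatFunc.algebraMap_X, ← map_pow, ← map_one (algebraMap (Polynomial ℚ) F), Ne,
    (IsFractionRing.injective (Polynomial ℚ) F).eq_iff]
  intro h
  simpa using congrArg Polynomial.natDegree h

/-- `inl j` stands for `k = 5j` and `inr j` for `k = 5j + 2`; `coeff21 t` is `c(k) q^(tk)`. -/
def kappa21 : ℤ ⊕ ℤ → ℤ := Sum.elim (fun j => 5 * j) (fun j => 5 * j + 2)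

def coeff21 (t : ℤ) : ℤ ⊕ ℤ → F :=
  Sum.elim (fun j => q ^ (10 * j ^ 2 + j + t * (5 * j)))
    (fun j => -q ^ (10 * j ^ 2 + 9 * j + 2 + t * (5 * j + 2)))

def sum21 (t N r : ℤ) : F := binSum q (coeff21 t) kappa21 N r

lemma kappa21_injective : kappa21.Injective := by
  rintro (i | i) (j | j) h <;> simp only [kappa21, Sum.elim_inl, Sum.elim_inr] at h <;>
    first | omega | (congr 1; omega)

lemma coeff21_mul_zpow (t : ℤ) (x : ℤ ⊕ ℤ) :
    coeff21 t x * q ^ kappa21 x = coeff21 (t + 1) x := by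
  cases x <;> simp only [coeff21, kappa21, Sum.elim_inl, Sum.elim_inr, neg_mul,
    ← zpow_add₀ q_ne_zero] <;> ring_nf

lemma coeff21_mul_zpow_neg (t : ℤ) (x : ℤ ⊕ ℤ) :
    coeff21 t x * q ^ (-kappa21 x) = coeff21 (t - 1) x := by
  cases x <;> simp only [coeff21, kappa21, Sum.elim_inl, Sum.elim_inr, neg_mul,
    ← zpow_add₀ q_ne_zero] <;> ring_nf

lemma sum21_pascal (t : ℤ) {N : ℤ} (hN : 1 ≤ N) (r : ℤ) :
    sum21 t N r = sum21 t (N - 1) r + q ^ (N - r) * sum21 (t + 1) (N - 1) (r - 1) := by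
  simp only [sum21, binSum_pascal q_pow_succ_ne_one q_ne_zero _ kappa21_injective hN,
    coeff21_mul_zpow]

lemma sum21_pascal' (t : ℤ) {N : ℤ} (hN : 1 ≤ N) (r : ℤ) :
    sum21 t N r = q ^ r * sum21 (t - 1) (N - 1) r + sum21 t (N - 1) (r - 1) := by
  simp only [sum21, binSum_pascal' q_pow_succ_ne_one q_ne_zero _ kappa21_injective hN,
    coeff21_mul_zpow_neg]

lemma sum21_eq_zero {t N r : ℤ} (h : 2 * (2 * r - N) = -1 - 5 * t) : sum21 t N r = 0 := by
  obtain ⟨u, rfl⟩ : ∃ u, t = 2 * u + 1 := ⟨(t - 1) / 2, by omega⟩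
  refine binSum_eq_zero_of_antisymm _
    ((Equiv.sumComm ℤ ℤ).trans ((Equiv.subLeft (-1 - u)).sumCongr (Equiv.subLeft (-1 - u))))
    (fun x => ?_) (fun x => ?_) <;>
  rcases x with j | j <;>
  simp only [Equiv.trans_apply, Equiv.sumComm_apply, Equiv.sumCongr_apply, Sum.swap_inl,
    Sum.swap_inr, Sum.map_inl, Sum.map_inr, Equiv.subLeft_apply, kappa21, coeff21, Sum.elim_inl,
    Sum.elim_inr, neg_neg]
  all_goals first | omega | ring_nf

lemma P21_eq_sum21 (n : ℕ) : P21 n = sum21 0 (2 * n) n := by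
  rw [sum21, binSum, finsum_sum_type (finite_support_binSum _ kappa21_injective _ _), P21,
    sub_eq_add_neg, ← finsum_neg_distrib]
  congr 1
  · refine finsum_congr fun j => ?_
    simp only [coeff21, kappa21, Sum.elim_inl, zero_mul, add_zero]
  · rw [← finsum_comp_equiv (Equiv.subLeft (-1))]
    refine finsum_congr fun j => ?_
    simp only [Equiv.subLeft_apply, coeff21, kappa21, Sum.elim_inr]
    rw [← qbin_sub_self_right q (2 * n),
      show 2 * (n : ℤ) - (n - 5 * (-1 - j) - 3) = n - (5 * j + 2) by ring,
      show 10 * (-1 - j) ^ 2 + 11 * (-1 - j) + 3 = 10 * j ^ 2 + 9 * j + 2 + 0 * (5 * j + 2) by ring]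
    ring

lemma sum21_two_mul_add_one (m : ℤ) (hm : 0 ≤ m) :
    sum21 0 (2 * m + 1) (m + 1) = sum21 0 (2 * m) m := by
  rw [sum21_pascal' 0 (by omega), zero_sub, sum21_eq_zero (by ring)]
  ring_nf

lemma sum21_two_mul (m : ℤ) (hm : 1 ≤ m) :
    sum21 0 (2 * m) m =
      q ^ (2 * m - 1) * sum21 0 (2 * m - 2) (m - 1) + sum21 0 (2 * m - 1) (m - 1) := by
  have h₁ : sum21 0 (2 * m) m =
      q ^ m * sum21 (-1) (2 * m - 1) m + sum21 0 (2 * m - 1) (m - 1) := by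
    rw [sum21_pascal' 0 (by omega)]
    ring_nf
  have h₂ : sum21 (-1) (2 * m - 1) m =
      sum21 (-1) (2 * m - 2) m + q ^ (m - 1) * sum21 0 (2 * m - 2) (m - 1) := by
    rw [sum21_pascal (-1) (by omega)]
    ring_nf
  rw [h₁, h₂, sum21_eq_zero (by ring), show 2 * m - 1 = m + (m - 1) by ring,
    zpow_add₀ q_ne_zero]
  ring

lemma sum21_two_mul_rec (m : ℤ) (hm : 2 ≤ m) :
    sum21 0 (2 * m) m = (1 + q ^ (2 * m - 1) + q ^ (2 * m - 2)) * sum21 0 (2 * m - 2) (m - 1)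
      - q ^ (4 * m - 5) * sum21 0 (2 * m - 4) (m - 2) := by
  have h₁ : sum21 0 (2 * m) m = sum21 0 (2 * m - 1) m + q ^ m * sum21 1 (2 * m - 1) (m - 1) := by
    rw [sum21_pascal 0 (by omega)]
    ring_nf
  have h₂ : sum21 0 (2 * m - 1) m = sum21 0 (2 * m - 2) (m - 1) := by
    have := sum21_two_mul_add_one (m - 1) (by omega)
    ring_nf at this ⊢
    exact this
  have h₃ : sum21 1 (2 * m - 1) (m - 1) =
      q ^ (m - 1) * sum21 0 (2 * m - 2) (m - 1) + sum21 1 (2 * m - 2) (m - 2) := by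
    rw [sum21_pascal' 1 (by omega)]
    ring_nf
  have h₄ : sum21 1 (2 * m - 2) (m - 2) = q ^ (m - 2) * sum21 0 (2 * m - 3) (m - 2) := by
    rw [sum21_pascal' 1 (by omega), sum21_eq_zero (t := 1) (by ring)]
    ring_nf
  have h₅ : sum21 0 (2 * m - 2) (m - 1) =
      q ^ (2 * m - 3) * sum21 0 (2 * m - 4) (m - 2) + sum21 0 (2 * m - 3) (m - 2) := by
    have := sum21_two_mul (m - 1) (by omega)
    ring_nf at this ⊢
    exact this
  have e₁ : q ^ (2 * m - 1) = q ^ m * q ^ (m - 1) := by rw [← zpow_add₀ q_ne_zero]; ring_nf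
  have e₂ : q ^ (2 * m - 2) = q ^ m * q ^ (m - 2) := by rw [← zpow_add₀ q_ne_zero]; ring_nf
  have e₃ : q ^ (4 * m - 5) = q ^ m * q ^ (m - 2) * q ^ (2 * m - 3) := by
    rw [← zpow_add₀ q_ne_zero, ← zpow_add₀ q_ne_zero]; ring_nf
  rw [h₁, h₂, h₃, h₄, e₁, e₂, e₃]
  linear_combination -(q ^ m * q ^ (m - 2)) * h₅

lemma sum21_zero_right {N : ℤ} (h₀ : 0 ≤ N) (h₂ : N ≤ 2) : sum21 0 N 0 = 1 := by
  rw [sum21, binSum, finsum_eq_single _ (.inl 0)]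
  · simp only [coeff21, kappa21, Sum.elim_inl, mul_zero, sub_self,
      qbin_zero_right q_pow_succ_ne_one h₀]
    norm_num
  rintro (j | j) hj
  all_goals rw [qbin_eq_zero, mul_zero]
  all_goals simp only [kappa21, Sum.elim_inl, Sum.elim_inr, ne_eq, Sum.inl.injEq] at hj ⊢
  all_goals omega

theorem stmt7 :
    (∀ n : ℕ, 2 ≤ n →
        P21 n = (1 + q ^ (2 * n - 1) + q ^ (2 * n - 2)) * P21 (n - 1)
          - q ^ (4 * n - 5) * P21 (n - 2)) ∧
      P21 0 = 1 ∧ P21 1 = 1 + q := by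
  refine ⟨fun n hn => ?_, ?_, ?_⟩
  · obtain ⟨m, rfl⟩ : ∃ m, n = m + 2 := ⟨n - 2, by omega⟩
    have h := sum21_two_mul_rec (m + 2) (by omega)
    rw [show m + 2 - 1 = m + 1 by omega, Nat.add_sub_cancel,
      show 2 * (m + 2) - 1 = 2 * m + 3 by omega, show 2 * (m + 2) - 2 = 2 * m + 2 by omega,
      show 4 * (m + 2) - 5 = 4 * m + 3 by omega]
    simp only [P21_eq_sum21, ← zpow_natCast]
    push_cast
    ring_nf at h ⊢
    exact h
  · rw [P21_eq_sum21, Nat.cast_zero, mul_zero, sum21_zero_right le_rfl zero_le_two]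
  · rw [P21_eq_sum21, Nat.cast_one, sum21_two_mul 1 le_rfl]
    norm_num [sum21_zero_right, add_comm]
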